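/- Suppose a group G acts uniformly equicontinuously on a Hausdorff uniform space X and the action has small scale bounded orbits. Let B be a basis of G-invariant entourages of X; for F ⊆ E in B there is a uniformly continuous map φ_{FE} : X/G_F → X/G_E sending the G_F-orbit of x to its G_E-orbit, giving an inverse system of uniform spaces {X/G_E}_{E∈B} (indexed by B ordered by reverse inclusion), where each X/G_E carries the uniform structure generated by its orbit map. Then the map X → lim_{E∈B} X/G_E sending x to the thread of its orbits is a uniform embedding; if moreover the orbit map p : X → X/G has complete fibers, it is a uniform equivalence. -/

import Mathlib

open Filter Set

universe u v

section Actions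

variable (G : Type*) (X : Type*)

/-- The action of `G` on the uniform space `X` is neutral. -/
def IsNeutralAction [SMul G X] [UniformSpace X] : Prop :=
  ∀ E ∈ uniformity X, ∃ F ∈ uniformity X,
    ∀ (x y : X) (g : G), (x, g • y) ∈ F → ∃ h : G, (h • x, y) ∈ E

/-- `G_E`: the subgroup of `G` generated by the elements that move some point
of `X` within the entourage `E`. -/
def subgroupEnt [Group G] [MulAction G X] (E : Set (X × X)) : Subgroup G :=
  Subgroup.closure { g : G | ∃ x : X, (x, g • x) ∈ E }

/-- The action has small scale bounded orbits. -/
def SmallScaleBoundedOrbits [Group G] [MulAction G X] [UniformSpace X] : Prop :=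
  ∀ E ∈ uniformity X, ∃ F ∈ uniformity X,
    ∀ g ∈ subgroupEnt G X F, ∀ x : X, (x, g • x) ∈ E

/-- The action is uniformly properly discontinuous. -/
def UnifProperlyDisc [Group G] [SMul G X] [UniformSpace X] : Prop :=
  ∃ E₀ ∈ uniformity X, ∀ (g : G) (x : X), (x, g • x) ∈ E₀ → g = 1

/-- The action is faithful. -/
def FaithfulAction [Group G] [SMul G X] : Prop :=
  ∀ g : G, (∀ x : X, g • x = x) → g = 1

/-- The action is uniformly equicontinuous. -/
def UnifEquicont [SMul G X] [UniformSpace X] : Prop :=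
  ∀ E ∈ uniformity X, ∃ F ∈ uniformity X,
    ∀ (g : G) (x y : X), (x, y) ∈ F → (g • x, g • y) ∈ E

/-- The entourage `E` is `G`-invariant. -/
def InvariantEnt [SMul G X] (E : Set (X × X)) : Prop :=
  ∀ (g : G) (x y : X), (x, y) ∈ E → (g • x, g • y) ∈ E

end Actions

theorem subgroupEnt_mono (G : Type u) (X : Type v) [Group G] [MulAction G X]
    {F E : Set (X × X)} (h : F ⊆ E) : subgroupEnt G X F ≤ subgroupEnt G X E :=
  Subgroup.closure_mono (fun _ hg => hg.imp (fun _ hx => h hx))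

theorem orbitRel_mono {G : Type u} [Group G] {X : Type v} [MulAction G X]
    {H K : Subgroup G} (hHK : H ≤ K) {x y : X}
    (h : (MulAction.orbitRel H X).r x y) : (MulAction.orbitRel K X).r x y := by
  obtain ⟨g, hg⟩ := h
  exact ⟨⟨g.1, hHK g.2⟩, hg⟩

/-- The inverse limit of the orbit spaces `X/G_E`, `E ∈ B`, ordered by reverse
inclusion, realized as the set of threads of orbits. -/
abbrev orbitQuotLim (G : Type u) [Group G] (X : Type v) [MulAction G X]
    [∀ H : Subgroup G, UniformSpace (Quotient (MulAction.orbitRel H X))]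
    (B : Set (Set (X × X))) : Type _ :=
  { t : ∀ i : B, Quotient (MulAction.orbitRel ↥(subgroupEnt G X i.1) X) //
    ∀ (i j : B) (_ : i.1 ⊆ j.1) (x : X),
      t i = Quotient.mk (MulAction.orbitRel ↥(subgroupEnt G X i.1) X) x →
        t j = Quotient.mk (MulAction.orbitRel ↥(subgroupEnt G X j.1) X) x }

/-- The natural map `X → lim_{E ∈ B} X/G_E` sending a point to the thread of
its orbits. -/
def toOrbitQuotLim (G : Type u) [Group G] (X : Type v) [MulAction G X]
    [∀ H : Subgroup G, UniformSpace (Quotient (MulAction.orbitRel H X))]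
    (B : Set (Set (X × X))) : X → orbitQuotLim G X B :=
  fun x => ⟨fun i => Quotient.mk (MulAction.orbitRel ↥(subgroupEnt G X i.1) X) x,
    fun i j hij x' hx => Quotient.sound
      (orbitRel_mono (subgroupEnt_mono G X hij) (Quotient.exact hx))⟩

/-! As the entourages `E ∈ B` are invariant, the `G_E`-orbits of `x` and `y` are `E`-close
exactly when `x` is `E`-close to a `G_E`-translate of `y`, and small scale bounded orbits make
the `G_E`-orbits uniformly small for small `E`; so the entourages of `X` are pulled back from
the orbit spaces. For surjectivity, the fibres of a thread form a Cauchy filter base inside one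
`G`-orbit, whose limit `x` exists by completeness of the orbit. For each `E ∈ B`, `x` is
`E`-close to a point `y` of the `E`-fibre in its own `G`-orbit; then `y = g • x` with `g ∈ G_E`,
so `x` lies in that fibre too. -/

open MulAction Topology

section OrbitQuotients

variable {G : Type*} [Group G] {X : Type*} [MulAction G X]

theorem orbitRel_mk_eq_mk_iff (H : Subgroup G) {x y : X} :
    Quotient.mk (orbitRel H X) x = Quotient.mk (orbitRel H X) y ↔ ∃ g ∈ H, g • y = x := by
  rw [Quotient.eq, orbitRel_apply]
  exact ⟨fun ⟨g, hg⟩ => ⟨g, g.2, hg⟩, fun ⟨g, hg, h⟩ => ⟨⟨g, hg⟩, h⟩⟩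

theorem orbitRel_mk_smul (H : Subgroup G) {g : G} (hg : g ∈ H) (x : X) :
    Quotient.mk (orbitRel H X) (g • x) = Quotient.mk (orbitRel H X) x :=
  (orbitRel_mk_eq_mk_iff H).2 ⟨g, hg, rfl⟩

theorem mem_orbit_of_orbitRel_mk_eq (H : Subgroup G) {x y : X}
    (h : Quotient.mk (orbitRel H X) y = Quotient.mk (orbitRel H X) x) : y ∈ orbit G x :=
  mem_orbit_of_mem_orbit_subgroup (orbitRel_apply.1 (Quotient.exact h))

theorem orbitRel_subgroupEnt_mk_eq_of_mem {E : Set (X × X)} {x y : X} (hy : y ∈ orbit G x)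
    (hxy : (x, y) ∈ E) :
    Quotient.mk (orbitRel (subgroupEnt G X E) X) x =
      Quotient.mk (orbitRel (subgroupEnt G X E) X) y := by
  obtain ⟨g, rfl⟩ := hy
  have hg : g ∈ subgroupEnt G X E := Subgroup.subset_closure ⟨x, hxy⟩
  exact (orbitRel_mk_smul _ hg x).symm

theorem InvariantEnt.exists_smul_mem_of_mem_image {E : Set (X × X)} (hE : InvariantEnt G X E)
    (H : Subgroup G) {x y : X}
    (h : (Quotient.mk (orbitRel H X) x, Quotient.mk (orbitRel H X) y) ∈
      Prod.map (Quotient.mk (orbitRel H X)) (Quotient.mk (orbitRel H X)) '' E) :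
    ∃ g ∈ H, (x, g • y) ∈ E := by
  obtain ⟨⟨a, b⟩, hab, hmk⟩ := h
  obtain ⟨g, hg, rfl⟩ := (orbitRel_mk_eq_mk_iff H).1 (congrArg Prod.fst hmk).symm
  obtain ⟨k, hk, rfl⟩ := (orbitRel_mk_eq_mk_iff H).1 (congrArg Prod.snd hmk).symm
  refine ⟨g * k⁻¹, H.mul_mem hg (H.inv_mem hk), ?_⟩
  rw [mul_smul, inv_smul_smul]
  exact hE g a b hab

variable [UniformSpace X]

theorem SmallScaleBoundedOrbits.exists_mem_subset_of_orbitRel {B : Set (Set (X × X))}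
    (hssbo : SmallScaleBoundedOrbits G X) (hBbasis : ∀ S ∈ uniformity X, ∃ E ∈ B, E ⊆ S)
    {S : Set (X × X)} (hS : S ∈ uniformity X) :
    ∃ E ∈ B, E ⊆ S ∧ ∀ x y : X, Quotient.mk (orbitRel (subgroupEnt G X E) X) x =
      Quotient.mk (orbitRel (subgroupEnt G X E) X) y → (x, y) ∈ S := by
  obtain ⟨F, hF, hFS⟩ := hssbo S hS
  obtain ⟨E, hEB, hEFS⟩ := hBbasis (F ∩ S) (inter_mem hF hS)
  refine ⟨E, hEB, hEFS.trans inter_subset_right, fun x y hxy => ?_⟩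
  obtain ⟨g, hg, rfl⟩ := (orbitRel_mk_eq_mk_iff _).1 hxy.symm
  exact hFS g (subgroupEnt_mono G X (hEFS.trans inter_subset_left) hg) x

end OrbitQuotients

section Threads

variable {G : Type*} [Group G] {X : Type*} [MulAction G X]
  [∀ H : Subgroup G, UniformSpace (Quotient (orbitRel H X))] {B : Set (Set (X × X))}

def fiberFilter (t : orbitQuotLim G X B) : Filter X :=
  ⨅ i : B, 𝓟 (Quotient.mk (orbitRel (subgroupEnt G X i.1) X) ⁻¹' {t.1 i})

theorem mem_fiberFilter (t : orbitQuotLim G X B) (i : B) :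
    Quotient.mk (orbitRel (subgroupEnt G X i.1) X) ⁻¹' {t.1 i} ∈ fiberFilter t :=
  mem_iInf_of_mem i (mem_principal_self _)

theorem fiberFilter_le_principal_orbit (t : orbitQuotLim G X B) (i : B) {x₀ : X}
    (hx₀ : Quotient.mk (orbitRel (subgroupEnt G X i.1) X) x₀ = t.1 i) :
    fiberFilter t ≤ 𝓟 (orbit G x₀) :=
  le_principal_iff.2 <| mem_of_superset (mem_fiberFilter t i) fun _ hy =>
    mem_orbit_of_orbitRel_mk_eq _ (Eq.trans hy hx₀.symm)

variable [UniformSpace X]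

theorem toOrbitQuotLim_injective [T0Space X] (hssbo : SmallScaleBoundedOrbits G X)
    (hBbasis : ∀ S ∈ uniformity X, ∃ E ∈ B, E ⊆ S) :
    Function.Injective (toOrbitQuotLim G X B) := by
  intro x y hxy
  refine eq_of_uniformity fun hS => ?_
  obtain ⟨E, hEB, -, hE⟩ := hssbo.exists_mem_subset_of_orbitRel hBbasis hS
  exact hE x y (congrFun (congrArg Subtype.val hxy) ⟨E, hEB⟩)

theorem isUniformInducing_toOrbitQuotLim (hssbo : SmallScaleBoundedOrbits G X)
    (hBent : ∀ E ∈ B, E ∈ uniformity X) (hBbasis : ∀ S ∈ uniformity X, ∃ E ∈ B, E ⊆ S)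
    (hBinv : ∀ E ∈ B, InvariantEnt G X E)
    (huH : ∀ E ∈ B,
      (uniformity (Quotient (orbitRel ↥(subgroupEnt G X E) X))).HasBasis
        (fun D : Set (X × X) => D ∈ uniformity X)
        (fun D => Prod.map (Quotient.mk (orbitRel ↥(subgroupEnt G X E) X))
          (Quotient.mk (orbitRel ↥(subgroupEnt G X E) X)) '' D)) :
    IsUniformInducing (toOrbitQuotLim G X B) := by
  have hmk (E : Set (X × X)) (hE : E ∈ B) :
      UniformContinuous (Quotient.mk (orbitRel (subgroupEnt G X E) X)) :=
    (huH E hE).tendsto_right_iff.2 fun D hD => mem_of_superset hD fun p hp => ⟨p, hp, rfl⟩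
  have hproj (i : B) : UniformContinuous fun t : orbitQuotLim G X B => t.1 i :=
    (Pi.uniformContinuous_proj _ i).comp uniformContinuous_subtype_val
  have hthread : UniformContinuous fun x (i : B) =>
      Quotient.mk (orbitRel (subgroupEnt G X i.1) X) x :=
    uniformContinuous_pi.2 fun i => hmk i.1 i.2
  have hf : UniformContinuous (toOrbitQuotLim G X B) := hthread.subtype_mk _
  refine ⟨le_antisymm (fun S hS => ?_) hf.le_comap⟩
  obtain ⟨S₁, hS₁, hS₁S⟩ := comp_mem_uniformity_sets hS
  obtain ⟨E, hEB, hES₁, hE⟩ := hssbo.exists_mem_subset_of_orbitRel hBbasis hS₁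
  refine ⟨_, hproj ⟨E, hEB⟩ ((huH E hEB).mem_of_mem (hBent E hEB)), ?_⟩
  rintro ⟨x, y⟩ hxy
  obtain ⟨g, hg, hxgy⟩ := (hBinv E hEB).exists_smul_mem_of_mem_image _ hxy
  exact hS₁S (SetRel.prodMk_mem_comp (hES₁ hxgy) (hE _ _ (orbitRel_mk_smul _ hg y)))

theorem fiberFilter_neBot (hBent : ∀ E ∈ B, E ∈ uniformity X)
    (hBbasis : ∀ S ∈ uniformity X, ∃ E ∈ B, E ⊆ S) (t : orbitQuotLim G X B) :
    (fiberFilter t).NeBot := by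
  obtain ⟨E₀, hE₀, -⟩ := hBbasis univ univ_mem
  have : Nonempty B := ⟨⟨E₀, hE₀⟩⟩
  refine iInf_neBot_of_directed' (fun i j => ?_) fun i => principal_neBot_iff.2 ?_
  · obtain ⟨k, hkB, hk⟩ := hBbasis (i.1 ∩ j.1) (inter_mem (hBent _ i.2) (hBent _ j.2))
    have hfiber (l : B) (hkl : k ⊆ l.1) :
        Quotient.mk (orbitRel (subgroupEnt G X k) X) ⁻¹' {t.1 ⟨k, hkB⟩} ⊆
          Quotient.mk (orbitRel (subgroupEnt G X l.1) X) ⁻¹' {t.1 l} :=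
      fun x hx => t.2 ⟨k, hkB⟩ l hkl x (Eq.symm hx) |>.symm
    exact ⟨⟨k, hkB⟩, principal_mono.2 (hfiber i (hk.trans inter_subset_left)),
      principal_mono.2 (hfiber j (hk.trans inter_subset_right))⟩
  · exact Quotient.exists_rep (t.1 i)

theorem cauchy_fiberFilter (hssbo : SmallScaleBoundedOrbits G X)
    (hBent : ∀ E ∈ B, E ∈ uniformity X) (hBbasis : ∀ S ∈ uniformity X, ∃ E ∈ B, E ⊆ S)
    (t : orbitQuotLim G X B) : Cauchy (fiberFilter t) := by
  have := fiberFilter_neBot hBent hBbasis t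
  refine cauchy_iff.2 ⟨inferInstance, fun S hS => ?_⟩
  obtain ⟨E, hEB, -, hE⟩ := hssbo.exists_mem_subset_of_orbitRel hBbasis hS
  refine ⟨_, mem_fiberFilter t ⟨E, hEB⟩, ?_⟩
  rintro ⟨x, y⟩ ⟨hx, hy⟩
  exact hE x y (Eq.trans hx (Eq.symm hy))

theorem toOrbitQuotLim_eq_of_fiberFilter_le_nhds (hBent : ∀ E ∈ B, E ∈ uniformity X)
    (hBbasis : ∀ S ∈ uniformity X, ∃ E ∈ B, E ⊆ S) {t : orbitQuotLim G X B} {x₀ x : X}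
    (hO : fiberFilter t ≤ 𝓟 (orbit G x₀)) (hxO : x ∈ orbit G x₀) (hx : fiberFilter t ≤ 𝓝 x) :
    toOrbitQuotLim G X B x = t := by
  have := fiberFilter_neBot hBent hBbasis t
  refine Subtype.ext (funext fun i => ?_)
  obtain ⟨y, ⟨hyt, hyO⟩, hxy⟩ := Filter.nonempty_of_mem <| inter_mem
    (inter_mem (mem_fiberFilter t i) (le_principal_iff.1 hO))
    (hx (UniformSpace.ball_mem_nhds x (hBent i.1 i.2)))
  rw [← orbit_eq_iff.2 hxO] at hyO
  exact (orbitRel_subgroupEnt_mk_eq_of_mem hyO hxy).trans hyt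

theorem toOrbitQuotLim_surjective (hssbo : SmallScaleBoundedOrbits G X)
    (hBent : ∀ E ∈ B, E ∈ uniformity X) (hBbasis : ∀ S ∈ uniformity X, ∃ E ∈ B, E ⊆ S)
    (hcomp : ∀ x : X, IsComplete (orbit G x)) :
    Function.Surjective (toOrbitQuotLim G X B) := by
  intro t
  obtain ⟨E₀, hE₀, -⟩ := hBbasis univ univ_mem
  obtain ⟨x₀, hx₀⟩ := Quotient.exists_rep (t.1 ⟨E₀, hE₀⟩)
  have hO := fiberFilter_le_principal_orbit t ⟨E₀, hE₀⟩ hx₀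
  obtain ⟨x, hxO, hx⟩ := hcomp x₀ _ (cauchy_fiberFilter hssbo hBent hBbasis t) hO
  exact ⟨x, toOrbitQuotLim_eq_of_fiberFilter_le_nhds hBent hBbasis hO hxO hx⟩

end Threads

/-- Suppose `G` acts uniformly equicontinuously on a Hausdorff uniform space
`X` with small scale bounded orbits, `B` is a basis of `G`-invariant entourages
of `X`, and each orbit space `X/G_E` carries the uniform structure generated by
its orbit map.  Then the natural map `X → lim_{E ∈ B} X/G_E` is a uniform
embedding, and if the orbit map `X → X/G` has complete fibers (every orbit is
complete) it is a uniform equivalence. -/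
theorem toOrbitQuotLim_isUniformEmbedding
    {G : Type u} [Group G] {X : Type v} [UniformSpace X] [MulAction G X]
    [T2Space X]
    (hue : UnifEquicont G X) (hssbo : SmallScaleBoundedOrbits G X)
    (B : Set (Set (X × X)))
    (hBent : ∀ E ∈ B, E ∈ uniformity X)
    (hBbasis : ∀ S ∈ uniformity X, ∃ E ∈ B, E ⊆ S)
    (hBinv : ∀ E ∈ B, InvariantEnt G X E)
    [∀ H : Subgroup G, UniformSpace (Quotient (MulAction.orbitRel H X))]
    (huH : ∀ E ∈ B,
      (uniformity (Quotient (MulAction.orbitRel ↥(subgroupEnt G X E) X))).HasBasis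
        (fun D : Set (X × X) => D ∈ uniformity X)
        (fun D => Prod.map (Quotient.mk (MulAction.orbitRel ↥(subgroupEnt G X E) X))
          (Quotient.mk (MulAction.orbitRel ↥(subgroupEnt G X E) X)) '' D)) :
    IsUniformEmbedding (toOrbitQuotLim G X B) ∧
      ((∀ x : X, IsComplete (MulAction.orbit G x)) →
        ∃ e : X ≃ᵤ orbitQuotLim G X B, ⇑e = toOrbitQuotLim G X B) := by
  have hind := isUniformInducing_toOrbitQuotLim hssbo hBent hBbasis hBinv huH
  have hinj := toOrbitQuotLim_injective (B := B) hssbo hBbasis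
  refine ⟨⟨hind, hinj⟩, fun hcomp => ?_⟩
  have hsurj := toOrbitQuotLim_surjective hssbo hBent hBbasis hcomp
  exact ⟨(Equiv.ofBijective _ ⟨hinj, hsurj⟩).toUniformEquivOfIsUniformInducing hind, rfl⟩
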